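/- arXiv:1708.05848 — 8 statements merged into one kernel-verified Lean document; each statement's English description precedes it below -/
import Mathlib

section
/- Let f₂(z) = -3(3z-4)/(2z(2z-3)²), viewed as a real function on (-∞,0). Then f₂ is strictly decreasing on (-∞,0) and maps (-∞,0) bijectively onto (-∞,0). -/
open Set

private lemma den_neg {x : ℝ} (hx : x < 0) : 2 * x * (2 * x - 3) ^ 2 < 0 := by
  have h1 : (0:ℝ) < (2 * x - 3) ^ 2 := by nlinarith
  have h2 : 2 * x < 0 := by linarith
  exact mul_neg_of_neg_of_pos h2 h1

private lemma key_deriv {x : ℝ} (hx : x < 0) :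
    HasDerivAt (fun x : ℝ => -3 * (3 * x - 4) / (2 * x * (2 * x - 3) ^ 2))
      ((-9 * (2 * x * (2 * x - 3) ^ 2) -
        -3 * (3 * x - 4) * (2 * (2 * x - 3) ^ 2 + 2 * x * (2 * (2 * x - 3) ^ 1 * 2))) /
        (2 * x * (2 * x - 3) ^ 2) ^ 2) x := by
  have h2x : HasDerivAt (fun x : ℝ => 2 * x) 2 x := by
    simpa using (hasDerivAt_id x).const_mul 2
  have hn : HasDerivAt (fun x : ℝ => -3 * (3 * x - 4)) (-9) x := by
    have h3x : HasDerivAt (fun x : ℝ => 3 * x) 3 x := by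
      simpa using (hasDerivAt_id x).const_mul 3
    have h := (h3x.sub_const 4).const_mul (-3)
    have heq : (fun x : ℝ => -3 * (3 * x - 4)) = fun x : ℝ => -3 * (3 * x - 4) := rfl
    have : (-3 : ℝ) * 3 = -9 := by norm_num
    simpa [this] using h
  have hsq : HasDerivAt (fun x : ℝ => (2 * x - 3) ^ 2) (2 * (2 * x - 3) ^ 1 * 2) x :=
    (h2x.sub_const 3).pow 2
  have hd : HasDerivAt (fun x : ℝ => 2 * x * (2 * x - 3) ^ 2)
      (2 * (2 * x - 3) ^ 2 + 2 * x * (2 * (2 * x - 3) ^ 1 * 2)) x := h2x.mul hsq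
  exact hn.div hd (ne_of_lt (den_neg hx))

/-- f₂(x) = -3(3x-4)/(2x(2x-3)²) is strictly decreasing on (-∞,0) and maps
(-∞,0) bijectively onto (-∞,0). -/
theorem stmt_1 (f : ℝ → ℝ)
    (hf : ∀ x : ℝ, f x = -3 * (3 * x - 4) / (2 * x * (2 * x - 3) ^ 2)) :
    StrictAntiOn f (Set.Iio 0) ∧ Set.BijOn f (Set.Iio 0) (Set.Iio 0) := by
  have hF : f = fun x : ℝ => -3 * (3 * x - 4) / (2 * x * (2 * x - 3) ^ 2) := funext hf
  subst hF
  set f : ℝ → ℝ := fun x : ℝ => -3 * (3 * x - 4) / (2 * x * (2 * x - 3) ^ 2) with hfdef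
  have hcont : ∀ x : ℝ, x < 0 → ContinuousAt f x := fun x hx =>
    (key_deriv hx).continuousAt
  have hanti : StrictAntiOn f (Set.Iio 0) := by
    apply strictAntiOn_of_deriv_neg (convex_Iio 0)
      (fun x hx => (hcont x hx).continuousWithinAt)
    intro x hx
    rw [interior_Iio] at hx
    have hx0 : x < 0 := hx
    rw [(key_deriv hx0).deriv]
    apply div_neg_of_neg_of_pos
    · have h1 : (0:ℝ) < (x - 1) ^ 2 := by nlinarith [sq_nonneg x, hx0]
      have h2 : (0:ℝ) < 3 - 2 * x := by linarith
      nlinarith [mul_pos h1 h2]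
    · nlinarith [mul_pos_of_neg_of_neg (den_neg hx0) (den_neg hx0)]
  have hmaps : Set.MapsTo f (Set.Iio 0) (Set.Iio 0) := by
    intro x hx
    simp only [Set.mem_Iio] at hx ⊢
    have hN : (0:ℝ) < -3 * (3 * x - 4) := by linarith
    exact div_neg_of_pos_of_neg hN (den_neg hx)
  refine ⟨hanti, hmaps, hanti.injOn, ?_⟩
  -- surjectivity
  intro y hy
  simp only [Set.mem_Iio] at hy
  -- right endpoint a = -ε
  set ε : ℝ := min 1 (6 / (25 * (-y))) with hεdef
  have hεpos : 0 < ε := lt_min one_pos (div_pos (by norm_num) (by linarith))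
  have hε1 : ε ≤ 1 := min_le_left _ _
  have hε2 : ε * (25 * (-y)) ≤ 6 := by
    have h := min_le_right 1 (6 / (25 * (-y)))
    have h25 : (0:ℝ) < 25 * (-y) := by linarith
    exact (le_div_iff₀ h25).mp h
  set t : ℝ := max 1 (21 / (8 * (-y))) with htdef
  have ht1 : (1:ℝ) ≤ t := le_max_left _ _
  have ht2 : 21 ≤ t * (8 * (-y)) := by
    have h := le_max_right 1 (21 / (8 * (-y)))
    have h8 : (0:ℝ) < 8 * (-y) := by linarith
    exact (div_le_iff₀ h8).mp h
  have hab : -t ≤ -ε := by linarith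
  have hεneg : -ε < 0 := by linarith
  have htneg : -t < 0 := by linarith
  have hconton : ContinuousOn f (Set.Icc (-t) (-ε)) := by
    intro x hx
    have hx0 : x < 0 := lt_of_le_of_lt hx.2 hεneg
    exact (hcont x hx0).continuousWithinAt
  have hfa : f (-ε) ≤ y := by
    show -3 * (3 * (-ε) - 4) / (2 * (-ε) * (2 * (-ε) - 3) ^ 2) ≤ y
    rw [div_le_iff_of_neg (den_neg hεneg)]
    nlinarith [mul_pos hεpos (neg_pos.mpr hy), sq_nonneg (1 - ε),
      mul_nonneg (mul_pos hεpos (neg_pos.mpr hy)).le (sq_nonneg (1 - ε)),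
      mul_nonneg (mul_pos hεpos (neg_pos.mpr hy)).le (sq_nonneg ε)]
  have hfb : y ≤ f (-t) := by
    show y ≤ -3 * (3 * (-t) - 4) / (2 * (-t) * (2 * (-t) - 3) ^ 2)
    rw [le_div_iff_of_neg (den_neg htneg)]
    nlinarith [mul_pos (neg_pos.mpr hy) (show (0:ℝ) < t by linarith),
      mul_nonneg (mul_nonneg (neg_pos.mpr hy).le (show (0:ℝ) ≤ t by linarith))
        (sq_nonneg (t - 1)),
      mul_nonneg (mul_nonneg (neg_pos.mpr hy).le (show (0:ℝ) ≤ t - 1 by linarith))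
        (sq_nonneg t)]
  have := intermediate_value_Icc' hab hconton (Set.mem_Icc.mpr ⟨hfa, hfb⟩)
  obtain ⟨x, hx, hxy⟩ := this
  exact ⟨x, Set.mem_Iio.mpr (lt_of_le_of_lt hx.2 hεneg), hxy⟩
end

section
/- Let f₂(z) = -3(3z-4)/(2z(2z-3)²). There exists a unique ξ ∈ (-∞,0) with f₂(ξ) = ξ, and this fixed point is repelling, i.e. |f₂'(ξ)| > 1. -/
/-!
On `x < 0` the fixed-point equation `f₂ x = x` reads `2x(2x-3)² = 12/x - 9`. The left side
increases and the right side decreases, so there is at most one solution, and the sign change of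
their difference on `[-1, -1/2]` gives one. The derivative simplifies to
`f₂' x = 18(x-1)² / (x²(2x-3)³)`; substituting `2ξ²(2ξ-3)² = 12 - 9ξ` at a fixed point gives
`|f₂' ξ| = 36(ξ-1)² / ((12-9ξ)(3-2ξ))`, and this exceeds `1` exactly when `ξ(18ξ - 21) > 0`,
which holds for every `ξ < 0`.
-/

open Set

noncomputable def f₂ (x : ℝ) : ℝ := -3 * (3 * x - 4) / (2 * x * (2 * x - 3) ^ 2)

noncomputable def fixedDefect (x : ℝ) : ℝ := 2 * x * (2 * x - 3) ^ 2 + 9 - 12 / x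

lemma f₂_eq_self_iff {x : ℝ} (hx : x ≠ 0) (h3 : 2 * x - 3 ≠ 0) :
    f₂ x = x ↔ 2 * x ^ 2 * (2 * x - 3) ^ 2 = 12 - 9 * x := by
  rw [f₂, div_eq_iff (by simp [hx, h3])]
  constructor <;> intro h <;> linarith

lemma fixedDefect_eq_zero_iff {x : ℝ} (hx : x ≠ 0) :
    fixedDefect x = 0 ↔ 2 * x ^ 2 * (2 * x - 3) ^ 2 = 12 - 9 * x := by
  rw [fixedDefect, ← mul_left_inj' hx]
  field_simp
  constructor <;> intro h <;> linarith

lemma strictMonoOn_fixedDefect : StrictMonoOn fixedDefect (Iio 0) := by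
  intro x (hx : x < 0) y (hy : y < 0) hxy
  have hinv : y⁻¹ < x⁻¹ := (inv_lt_inv_of_neg hy hx).mpr hxy
  have hcubic : 2 * x * (2 * x - 3) ^ 2 < 2 * y * (2 * y - 3) ^ 2 := by
    nlinarith [mul_pos (sub_pos.mpr hxy) (mul_pos_of_neg_of_neg hx hy), sq_nonneg (x + y)]
  simp only [fixedDefect, div_eq_mul_inv]
  linarith

lemma exists_fixedDefect_eq_zero : ∃ x ∈ Icc (-1 : ℝ) (-1 / 2), fixedDefect x = 0 := by
  have hcont : ContinuousOn fixedDefect (Icc (-1) (-1 / 2)) := by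
    have hne : ∀ x ∈ Icc (-1 : ℝ) (-1 / 2), x ≠ 0 := fun x hx => (hx.2.trans_lt (by norm_num)).ne
    unfold fixedDefect
    fun_prop (disch := assumption)
  exact intermediate_value_Icc (by norm_num) hcont
    ⟨by norm_num [fixedDefect], by norm_num [fixedDefect]⟩

lemma hasDerivAt_f₂ {x : ℝ} (hx : x ≠ 0) (h3 : 2 * x - 3 ≠ 0) :
    HasDerivAt f₂ (18 * (x - 1) ^ 2 / (x ^ 2 * (2 * x - 3) ^ 3)) x := by
  have hid := hasDerivAt_id' x
  have h := (((hid.const_mul 3).sub_const 4).const_mul (-3)).fun_div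
    ((hid.const_mul 2).fun_mul (((hid.const_mul 2).sub_const 3).fun_pow 2)) (by simp [hx, h3])
  refine h.congr_deriv ?_
  field_simp
  ring

lemma one_lt_abs_deriv_f₂ {x : ℝ} (hx : x < 0) (hfix : f₂ x = x) : 1 < |deriv f₂ x| := by
  have h3 : 2 * x - 3 < 0 := by linarith
  have hpoly := (f₂_eq_self_iff hx.ne h3.ne).mp hfix
  have hden : 0 < (12 - 9 * x) * (3 - 2 * x) := by nlinarith
  have hderiv : deriv f₂ x = -(36 * (x - 1) ^ 2 / ((12 - 9 * x) * (3 - 2 * x))) := by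
    rw [(hasDerivAt_f₂ hx.ne h3.ne).deriv, ← neg_div,
      div_eq_div_iff (by simp [hx.ne, h3.ne]) hden.ne']
    linear_combination (18 * (x - 1) ^ 2 * (2 * x - 3)) * hpoly
  rw [hderiv, abs_neg, abs_of_pos (div_pos (by nlinarith) hden), one_lt_div hden]
  linear_combination mul_pos_of_neg_of_neg hx (by linarith : 18 * x - 21 < 0)

/-- f₂(x) = -3(3x-4)/(2x(2x-3)²) has a unique fixed point ξ in (-∞,0),
and this fixed point is repelling: |f₂'(ξ)| > 1. -/
theorem stmt_2 (f : ℝ → ℝ)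
    (hf : ∀ x : ℝ, f x = -3 * (3 * x - 4) / (2 * x * (2 * x - 3) ^ 2)) :
    ∃ ξ : ℝ, ξ < 0 ∧ f ξ = ξ ∧ |deriv f ξ| > 1 ∧
      ∀ ξ' : ℝ, ξ' < 0 → f ξ' = ξ' → ξ' = ξ := by
  obtain rfl : f = f₂ := funext hf
  have fixed_iff {x : ℝ} (hx : x < 0) : f₂ x = x ↔ fixedDefect x = 0 :=
    (f₂_eq_self_iff hx.ne (by linarith)).trans (fixedDefect_eq_zero_iff hx.ne).symm
  obtain ⟨ξ, hξI, hξ⟩ := exists_fixedDefect_eq_zero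
  have hξ0 : ξ < 0 := by linarith [hξI.2]
  have hfix : f₂ ξ = ξ := (fixed_iff hξ0).mpr hξ
  refine ⟨ξ, hξ0, hfix, one_lt_abs_deriv_f₂ hξ0 hfix, fun ξ' hξ'0 hfix' => ?_⟩
  exact strictMonoOn_fixedDefect.injOn hξ'0 hξ0 (((fixed_iff hξ'0).mp hfix').trans hξ.symm)
end

section
/- Let f₃(x) = 8(x-1)²(x+8)/(27x) and let ξ₁ be the unique fixed point of f₃ in (-8,0). Then ξ₁ is repelling: |f₃'(ξ₁)| > 1. -/
/-- The fixed point ξ₁ ∈ (-8,0) of f₃(x) = 8(x-1)²(x+8)/(27x) is repelling: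
|f₃'(ξ₁)| > 1. -/
theorem stmt_6 (f : ℝ → ℝ)
    (hf : ∀ x : ℝ, f x = 8 * (x - 1) ^ 2 * (x + 8) / (27 * x))
    (ξ₁ : ℝ) (h₁ : -8 < ξ₁) (h₂ : ξ₁ < 0) (hfix : f ξ₁ = ξ₁) :
    |deriv f ξ₁| > 1 := by
  have hx : ξ₁ ≠ 0 := ne_of_lt h₂
  have hfe : f = fun x : ℝ => 8 * (x - 1) ^ 2 * (x + 8) / (27 * x) := funext hf
  -- fixed point polynomial relation
  have hq : 8 * (ξ₁ - 1) ^ 2 * (ξ₁ + 8) = 27 * ξ₁ ^ 2 := by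
    rw [hf] at hfix
    field_simp at hfix
    linarith [hfix]
  -- derivative
  have hN : HasDerivAt (fun x : ℝ => 8 * (x - 1) ^ 2 * (x + 8))
      (24 * ξ₁ ^ 2 + 96 * ξ₁ - 120) ξ₁ := by
    have h1 : HasDerivAt (fun x : ℝ => 8 * (x - 1) ^ 2 * (x + 8))
        ((8 * (2 * (ξ₁ - 1) ^ 1 * 1)) * (ξ₁ + 8) + 8 * (ξ₁ - 1) ^ 2 * 1) ξ₁ := by
      exact ((((hasDerivAt_id ξ₁).sub_const 1).pow 2).const_mul 8).mul
        ((hasDerivAt_id ξ₁).add_const 8)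
    convert h1 using 1; ring
  have hD : HasDerivAt (fun x : ℝ => 27 * x) 27 ξ₁ := by
    simpa using (hasDerivAt_id ξ₁).const_mul 27
  have hD0 : 27 * ξ₁ ≠ 0 := by
    intro h; apply hx; linarith [mul_eq_zero.mp h]
  have hdf : HasDerivAt f
      (((24 * ξ₁ ^ 2 + 96 * ξ₁ - 120) * (27 * ξ₁)
        - 8 * (ξ₁ - 1) ^ 2 * (ξ₁ + 8) * 27) / (27 * ξ₁) ^ 2) ξ₁ := by
    rw [hfe]; exact hN.div hD hD0
  have hderiv : deriv f ξ₁
      = ((24 * ξ₁ ^ 2 + 96 * ξ₁ - 120) * (27 * ξ₁)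
        - 8 * (ξ₁ - 1) ^ 2 * (ξ₁ + 8) * 27) / (27 * ξ₁) ^ 2 := hdf.deriv
  have hpos : (0 : ℝ) < (27 * ξ₁) ^ 2 := by positivity
  have hlt : deriv f ξ₁ < -1 := by
    rw [hderiv, div_lt_iff₀ hpos]
    nlinarith [hq, mul_pos (show (0:ℝ) < ξ₁ + 8 by linarith) (show (0:ℝ) < -ξ₁ by linarith),
      sq_nonneg ξ₁, mul_pos (mul_pos (show (0:ℝ) < ξ₁ + 8 by linarith)
        (show (0:ℝ) < -ξ₁ by linarith)) (show (0:ℝ) < -ξ₁ by linarith)]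
  have := neg_le_abs (deriv f ξ₁)
  linarith
end

section
/- The Möbius-free semiconjugacy: let g_μ(z) = z^{d_∞} + μ/z^{d₀} and F_λ(z) = λ(z-1)^{d₀+d_∞}/z^{d₀} with λ = (-μ)^{d_∞-1}, and let φ(z) = -z^{d₀+d_∞}/μ. Then φ ∘ g_μ = F_λ ∘ φ on ℂ \ {0}. -/
set_option maxRecDepth 8000 in
/-- The map φ(z) = -z^{d₀+dinf}/μ semiconjugates g_μ(z) = z^{dinf} + μ/z^{d₀}
to F_λ(z) = λ(z-1)^{d₀+dinf}/z^{d₀} with λ = (-μ)^{dinf-1}: φ ∘ g_μ = F_λ ∘ φ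
on ℂ \ {0}. -/
theorem stmt_8 (d₀ dinf : ℕ) (hd₀ : 1 ≤ d₀) (hdinf : 2 ≤ dinf)
    (μ : ℂ) (hμ : μ ≠ 0) (lam : ℂ) (hlam : lam = (-μ) ^ (dinf - 1))
    (g F φ : ℂ → ℂ)
    (hg : ∀ z : ℂ, g z = z ^ dinf + μ / z ^ d₀)
    (hF : ∀ z : ℂ, F z = lam * (z - 1) ^ (d₀ + dinf) / z ^ d₀)
    (hφ : ∀ z : ℂ, φ z = -z ^ (d₀ + dinf) / μ) :
    ∀ z : ℂ, z ≠ 0 → g z ≠ 0 → φ (g z) = F (φ z) := by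
  obtain ⟨k, rfl⟩ : ∃ k, dinf = k + 2 := ⟨dinf - 2, by omega⟩
  obtain ⟨m, rfl⟩ : ∃ m, d₀ = m + 1 := ⟨d₀ - 1, by omega⟩
  intro z hz hgz
  have hz' : z ^ (m + 1) ≠ 0 := pow_ne_zero _ hz
  have key : φ z - 1 = -(z ^ (m + 1) * g z) / μ := by
    rw [hφ, hg]
    field_simp
    ring
  rw [hF, key, hφ, hφ, hlam]
  have h1 : (-(z ^ (m + 1) * g z) / μ) ^ (m + 1 + (k + 2))
      = (-1 : ℂ) ^ (m + 1 + (k + 2)) * (z ^ (m + 1) * g z) ^ (m + 1 + (k + 2))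
        / μ ^ (m + 1 + (k + 2)) := by
    rw [div_pow, neg_pow]
  have h2 : (-z ^ (m + 1 + (k + 2)) / μ) ^ (m + 1)
      = (-1 : ℂ) ^ (m + 1) * (z ^ (m + 1 + (k + 2))) ^ (m + 1) / μ ^ (m + 1) := by
    rw [div_pow, neg_pow]
  have h3 : (-μ) ^ (k + 2 - 1) = (-1 : ℂ) ^ (k + 1) * μ ^ (k + 1) := by
    rw [show k + 2 - 1 = k + 1 from rfl, neg_pow]
  have s1 : (-1 : ℂ) ^ (m + 1 + (k + 2)) = (-1) ^ m * (-1) ^ k * (-1) := by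
    rw [pow_add, pow_add, pow_succ, pow_add]; ring
  have s2 : (-1 : ℂ) ^ (m + 1) = (-1) ^ m * (-1) := by rw [pow_succ]
  have s3 : (-1 : ℂ) ^ (k + 1) = (-1) ^ k * (-1) := by rw [pow_succ]
  rw [h1, h2, h3, s1, s2, s3]
  rcases Nat.even_or_odd k with hk | hk <;> rcases Nat.even_or_odd m with hm | hm <;>
    rw [hk.neg_one_pow, hm.neg_one_pow] <;>
    field_simp <;> ring
end

section
/- For ϱ₀ = 18, the map g(z) = -289(87z²-20z+120)/(11(z-18)³) (as a real function on [0,1]) satisfies g([0,1]) ⊆ [1/2, 1] and g is strictly increasing on [0,1]. -/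
/-- g(z) = -289(87z²-20z+120)/(11(z-18)³) maps [0,1] into [1/2,1] and is
strictly increasing on [0,1]. -/
theorem stmt_14 (g : ℝ → ℝ)
    (hg : ∀ x : ℝ, g x = -289 * (87*x^2 - 20*x + 120) / (11 * (x - 18)^3)) :
    Set.MapsTo g (Set.Icc 0 1) (Set.Icc (1/2) 1) ∧
    StrictMonoOn g (Set.Icc 0 1) := by
  have key : ∀ x : ℝ, x ≤ 1 →
      g x = 289 * (87*x^2 - 20*x + 120) / (11 * (18 - x)^3) := by
    intro x hx
    rw [hg x]
    have h : (x - 18)^3 = -((18 - x)^3) := by ring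
    rw [h]
    field_simp
  constructor
  · intro x hx
    obtain ⟨hx0, hx1⟩ := hx
    have hd : 0 < 11 * (18 - x)^3 := by nlinarith [pow_pos (by linarith : (0:ℝ) < 18 - x) 3]
    rw [key x hx1]
    constructor
    · rw [le_div_iff₀ hd]
      nlinarith [sq_nonneg x, mul_nonneg hx0 (by linarith : (0:ℝ) ≤ 1 - x), sq_nonneg (1-x)]
    · rw [div_le_one hd]
      nlinarith [mul_nonneg hx0 (by linarith : (0:ℝ) ≤ 1 - x), sq_nonneg x, sq_nonneg (1-x),
        mul_nonneg (mul_nonneg hx0 hx0) (by linarith : (0:ℝ) ≤ 1 - x)]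
  · intro x hx y hy hxy
    obtain ⟨hx0, hx1⟩ := hx
    obtain ⟨hy0, hy1⟩ := hy
    have hdx : 0 < 11 * (18 - x)^3 := by nlinarith [pow_pos (by linarith : (0:ℝ) < 18 - x) 3]
    have hdy : 0 < 11 * (18 - y)^3 := by nlinarith [pow_pos (by linarith : (0:ℝ) < 18 - y) 3]
    rw [key x hx1, key y hy1, div_lt_div_iff₀ hdx hdy]
    have hyx : (0:ℝ) < y - x := sub_pos.mpr hxy
    have hy0' : (0:ℝ) < y := lt_of_le_of_lt hx0 hxy
    have hxy0 : (0:ℝ) ≤ x * y := mul_nonneg hx0 hy0'.le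
    have key2 : 0 < (y - x) * (500904*(x+y) + 120*x^2 + 120*y^2 - 83364*(x*y)
        - 20*(x^2*y) - 20*(x*y^2) + 87*(x^2*y^2)) := by
      apply mul_pos hyx
      nlinarith [mul_nonneg hxy0 (by linarith : (0:ℝ) ≤ 1 - x),
        mul_nonneg hxy0 (by linarith : (0:ℝ) ≤ 1 - y),
        sq_nonneg (x*y), mul_nonneg hx0 hy0'.le, sq_nonneg x, sq_nonneg y,
        mul_nonneg hx0 (by linarith : (0:ℝ) ≤ 1 - x)]
    nlinarith [key2]
end

section
/- Let α ∉ {0, 1/3, 1/2}, β = 3 - 1/α, and h_α(z) = ((3α-1)/α²)·(z²-3αz+α)/(z²(z-β)). Then h_α(1) = β, h_α(β) = ∞ (z = β is a pole of h_α), and z = 1 is a critical point of h_α with local degree 3, i.e. h_α'(1) = h_α''(1) = 0 and h_α'''(1) ≠ 0. -/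
private lemma hasDerivAt_poly8 (c0 c1 c2 c3 c4 c5 c6 c7 c8 z : ℂ) :
    HasDerivAt (fun z : ℂ => c0 + c1*z + c2*z^2 + c3*z^3 + c4*z^4 + c5*z^5 + c6*z^6 + c7*z^7 + c8*z^8)
      (c1 + 2*c2*z + 3*c3*z^2 + 4*c4*z^3 + 5*c5*z^4 + 6*c6*z^5 + 7*c7*z^6 + 8*c8*z^7) z := by
  have h := ((((((((hasDerivAt_const z c0).add ((hasDerivAt_id z).const_mul c1)).add
    ((hasDerivAt_pow 2 z).const_mul c2)).add ((hasDerivAt_pow 3 z).const_mul c3)).add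
    ((hasDerivAt_pow 4 z).const_mul c4)).add ((hasDerivAt_pow 5 z).const_mul c5)).add
    ((hasDerivAt_pow 6 z).const_mul c6)).add ((hasDerivAt_pow 7 z).const_mul c7)).add
    ((hasDerivAt_pow 8 z).const_mul c8)
  refine h.congr_deriv ?_
  push_cast [id_eq]
  ring

noncomputable def auxG0 (β : ℂ) : ℂ → ℂ := fun z => β + -β * ((z-1)^3 / (z^2*(z-β)))

noncomputable def auxG1 (β : ℂ) : ℂ → ℂ := fun z =>
  -β * ((0 + (-2*β)*z + (3+3*β)*z^2 + (-6)*z^3 + (3-β)*z^4 + 0*z^5 + 0*z^6 + 0*z^7 + 0*z^8)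
    / (z^2*(z-β))^2)

noncomputable def auxG2 (β : ℂ) : ℂ → ℂ := fun z =>
  -β * ((0 + 0*z + (-6*β^2)*z^2 + (16*β+6*β^2)*z^3 + (-12-18*β)*z^4 + 18*z^5 + (-6+2*β)*z^6
    + 0*z^7 + 0*z^8) / (z^2*(z-β))^3)

noncomputable def auxG3 (β : ℂ) : ℂ → ℂ := fun z =>
  -β * ((0 + 0*z + 0*z^2 + (-24*β^3)*z^3 + (90*β^2+18*β^3)*z^4 + (-120*β-72*β^2)*z^5
    + (60+108*β)*z^6 + (-72)*z^7 + (18-6*β)*z^8) / (z^2*(z-β))^4)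

private lemma auxQ (β z : ℂ) : HasDerivAt (fun w : ℂ => w^2*(w-β)) (2*z*(z-β)+z^2) z := by
  have h := (hasDerivAt_pow 2 z).mul ((hasDerivAt_id z).sub_const β)
  refine h.congr_deriv ?_
  push_cast [id_eq]
  ring

private lemma auxL1 (β z : ℂ) (hz : z^2*(z-β) ≠ 0) :
    HasDerivAt (auxG0 β) (auxG1 β z) z := by
  have hn : HasDerivAt (fun w : ℂ => (w-1)^3) (3*(z-1)^2) z := by
    have h := ((hasDerivAt_id z).sub_const 1).pow 3
    refine h.congr_deriv ?_
    push_cast [id_eq]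
    ring
  have h := ((hn.div (auxQ β z) hz).const_mul (-β)).const_add β
  unfold auxG0 auxG1
  refine h.congr_deriv ?_
  ring

private lemma auxL2 (β z : ℂ) (hz : z^2*(z-β) ≠ 0) :
    HasDerivAt (auxG1 β) (auxG2 β z) z := by
  have hN := hasDerivAt_poly8 0 (-2*β) (3+3*β) (-6) (3-β) 0 0 0 0 z
  have hq2 := (auxQ β z).pow 2
  have h := (hN.div hq2 (pow_ne_zero 2 hz)).const_mul (-β)
  unfold auxG1 auxG2
  refine h.congr_deriv ?_
  simp only [Pi.pow_apply]
  have hz0 : z ≠ 0 := by rintro rfl; simp at hz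
  have hzb : z - β ≠ 0 := (mul_ne_zero_iff.mp hz).2
  field_simp
  ring

private lemma auxL3 (β z : ℂ) (hz : z^2*(z-β) ≠ 0) :
    HasDerivAt (auxG2 β) (auxG3 β z) z := by
  have hN := hasDerivAt_poly8 0 0 (-6*β^2) (16*β+6*β^2) (-12-18*β) 18 (-6+2*β) 0 0 z
  have hq3 := (auxQ β z).pow 3
  have h := (hN.div hq3 (pow_ne_zero 3 hz)).const_mul (-β)
  unfold auxG2 auxG3
  refine h.congr_deriv ?_
  simp only [Pi.pow_apply]
  have hz0 : z ≠ 0 := by rintro rfl; simp at hz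
  have hzb : z - β ≠ 0 := (mul_ne_zero_iff.mp hz).2
  field_simp
  ring

/-- h_α(z) = ((3α-1)/α²)(z²-3αz+α)/(z²(z-β)) with β = 3 - 1/α satisfies
h_α(1) = β, β is a pole of h_α (the denominator vanishes at z = β while the
numerator does not), and z = 1 is a critical point of local degree 3:
h_α'(1) = h_α''(1) = 0 ≠ h_α'''(1). -/
theorem stmt_16 (α β : ℂ)
    (h0 : α ≠ 0) (h13 : α ≠ 1/3) (h12 : α ≠ 1/2) (hβ : β = 3 - 1/α)
    (h1β : (1:ℂ) ≠ β)
    (h : ℂ → ℂ)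
    (hh : ∀ z : ℂ, h z = ((3*α - 1) / α^2) * (z^2 - 3*α*z + α) / (z^2 * (z - β))) :
    h 1 = β ∧
    (β^2 * (β - β) = 0 ∧ β^2 - 3*α*β + α ≠ 0) ∧
    deriv h 1 = 0 ∧ iteratedDeriv 2 h 1 = 0 ∧ iteratedDeriv 3 h 1 ≠ 0 := by
  have hβ' : β*α = 3*α - 1 := by rw [hβ]; field_simp
  have h1b : (1:ℂ) - β ≠ 0 := sub_ne_zero.mpr h1β
  have hb0 : β ≠ 0 := by
    intro hc
    apply h13
    rw [hc] at hβ'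
    linear_combination -hβ'/3
  -- value at 1
  have hval : h 1 = β := by
    rw [hh 1]
    field_simp
    linear_combination ((α - α*β + β*α^2 - α^2) + (β*(2*α - α^2) + (α^2 + α - 1))) * hβ'
  -- pole
  have hpole : β^2 - 3*α*β + α ≠ 0 := by
    rw [hβ]
    intro hc
    apply h12
    field_simp at hc
    have h3 : α*(2*α - 1)^3 = 0 := by linear_combination -α*hc
    rcases mul_eq_zero.mp h3 with hx | hx
    · exact absurd hx h0
    have := pow_eq_zero_iff (n := 3) (by norm_num) |>.mp hx
    linear_combination this/2
  -- openness of the good set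
  have hcont : Continuous fun z : ℂ => z^2*(z-β) := by fun_prop
  have hSopen : IsOpen {z : ℂ | z^2*(z-β) ≠ 0} := by
    have : {z : ℂ | z^2*(z-β) ≠ 0} = (fun z : ℂ => z^2*(z-β)) ⁻¹' {(0:ℂ)}ᶜ := rfl
    rw [this]
    exact isOpen_compl_singleton.preimage hcont
  have h1S : (1:ℂ)^2*((1:ℂ)-β) ≠ 0 := by
    simpa using h1b
  -- h agrees with auxG0 on the good set
  have hfg : ∀ z : ℂ, z^2*(z-β) ≠ 0 → h z = auxG0 β z := by
    intro z hz
    obtain ⟨hz2, hzb⟩ := mul_ne_zero_iff.mp hz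
    have hz0 : z ≠ 0 := by
      intro hc; apply hz2; rw [hc]; ring
    rw [hh z]
    unfold auxG0
    field_simp
    linear_combination (α*β*z^2 - z^2 + 3*α*z - α) * hβ'
  -- first derivative on the good set
  have key1 : ∀ z : ℂ, z^2*(z-β) ≠ 0 → deriv h z = auxG1 β z := by
    intro z hz
    have hmem : {w : ℂ | w^2*(w-β) ≠ 0} ∈ nhds z := hSopen.mem_nhds hz
    have heq : h =ᶠ[nhds z] auxG0 β := Filter.eventuallyEq_of_mem hmem (fun w hw => hfg w hw)
    rw [heq.deriv_eq]
    exact (auxL1 β z hz).deriv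
  -- second derivative on the good set
  have key2 : ∀ z : ℂ, z^2*(z-β) ≠ 0 → deriv (deriv h) z = auxG2 β z := by
    intro z hz
    have hmem : {w : ℂ | w^2*(w-β) ≠ 0} ∈ nhds z := hSopen.mem_nhds hz
    have heq : deriv h =ᶠ[nhds z] auxG1 β := Filter.eventuallyEq_of_mem hmem (fun w hw => key1 w hw)
    rw [heq.deriv_eq]
    exact (auxL2 β z hz).deriv
  -- third derivative at 1
  have key3 : deriv (deriv (deriv h)) 1 = auxG3 β 1 := by
    have hmem : {w : ℂ | w^2*(w-β) ≠ 0} ∈ nhds (1:ℂ) := hSopen.mem_nhds h1S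
    have heq : deriv (deriv h) =ᶠ[nhds (1:ℂ)] auxG2 β :=
      Filter.eventuallyEq_of_mem hmem (fun w hw => key2 w hw)
    rw [heq.deriv_eq]
    exact (auxL3 β 1 h1S).deriv
  refine ⟨hval, ⟨by ring, hpole⟩, ?_, ?_, ?_⟩
  · rw [key1 1 h1S]
    unfold auxG1
    have hnum : (0 + (-2*β)*(1:ℂ) + (3+3*β)*(1:ℂ)^2 + (-6)*(1:ℂ)^3 + (3-β)*(1:ℂ)^4
        + 0*(1:ℂ)^5 + 0*(1:ℂ)^6 + 0*(1:ℂ)^7 + 0*(1:ℂ)^8) = 0 := by ring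
    rw [hnum, zero_div, mul_zero]
  · rw [show (2:ℕ) = 1+1 from rfl, iteratedDeriv_succ, iteratedDeriv_one, key2 1 h1S]
    unfold auxG2
    have hnum : (0 + 0*(1:ℂ) + (-6*β^2)*(1:ℂ)^2 + (16*β+6*β^2)*(1:ℂ)^3 + (-12-18*β)*(1:ℂ)^4
        + 18*(1:ℂ)^5 + (-6+2*β)*(1:ℂ)^6 + 0*(1:ℂ)^7 + 0*(1:ℂ)^8) = 0 := by ring
    rw [hnum, zero_div, mul_zero]
  · rw [show (3:ℕ) = 2+1 from rfl, iteratedDeriv_succ, show (2:ℕ) = 1+1 from rfl,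
      iteratedDeriv_succ, iteratedDeriv_one, key3]
    unfold auxG3
    have hval3 : -β * ((0 + 0*(1:ℂ) + 0*(1:ℂ)^2 + (-24*β^3)*(1:ℂ)^3 + (90*β^2+18*β^3)*(1:ℂ)^4
        + (-120*β-72*β^2)*(1:ℂ)^5 + (60+108*β)*(1:ℂ)^6 + (-72)*(1:ℂ)^7 + (18-6*β)*(1:ℂ)^8)
        / ((1:ℂ)^2*((1:ℂ)-β))^4) = (-6*β)/(1-β) := by
      field_simp
      ring
    rw [hval3]
    intro hc
    rcases div_eq_zero_iff.mp hc with hx | hx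
    · apply hb0
      linear_combination -hx/6
    · exact h1b (by linear_combination hx)
end

section
/- Let α ∉ {0, 1/3, 1/2}, β = 3 - 1/α, h_α(z) = ((3α-1)/α²)(z²-3αz+α)/(z²(z-β)). Then z_α = 6α - 2 is a critical point of h_α: h_α'(6α-2) = 0 (whenever 6α-2 ∉ {0, β}). -/
/-! The identity `α β = 3α - 1` collapses the numerator of the quotient rule for `h_α` to
`-z (z - (6α - 2)) (z - 1)²`, so the finite critical points of `h_α` other than `0` are
`1` (double) and `6α - 2`. -/

noncomputable section

namespace CubicFamily

def h (α β z : ℂ) : ℂ := ((3*α - 1) / α^2) * (z^2 - 3*α*z + α) / (z^2 * (z - β))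

theorem hasDerivAt_h {α β z : ℂ} (hα : α ≠ 0) (hβ : β = 3 - 1/α) (hz : z ≠ 0) (hzβ : z ≠ β) :
    HasDerivAt (h α β)
      (-((3*α - 1) / α^2) * (z - (6*α - 2)) * (z - 1)^2 / (z^3 * (z - β)^2)) z := by
  have hnum : HasDerivAt (fun w : ℂ => (3*α - 1) / α^2 * (w^2 - 3*α*w + α))
      ((3*α - 1) / α^2 * (2*z - 3*α)) z := by
    refine HasDerivAt.const_mul _ ?_
    simpa [mul_comm] using ((hasDerivAt_pow 2 z).sub ((hasDerivAt_id z).const_mul (3*α))).add_const α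
  have hden : HasDerivAt (fun w : ℂ => w^2 * (w - β)) (2*z*(z - β) + z^2) z :=
    ((hasDerivAt_pow 2 z).mul ((hasDerivAt_id z).sub_const β)).congr_deriv (by norm_num)
  have hzβ' : z - β ≠ 0 := sub_ne_zero.mpr hzβ
  refine (hnum.div hden (by positivity)).congr_deriv ?_
  subst hβ
  field_simp
  ring

theorem deriv_h_eq_zero {α β : ℂ} (hα : α ≠ 0) (hβ : β = 3 - 1/α)
    (hz0 : 6*α - 2 ≠ 0) (hzβ : 6*α - 2 ≠ β) : deriv (h α β) (6*α - 2) = 0 := by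
  simp [(hasDerivAt_h hα hβ hz0 hzβ).deriv]

end CubicFamily

end

theorem stmt_17_general (α β : ℂ)
    (h0 : α ≠ 0) (hβ : β = 3 - 1/α)
    (hz0 : 6*α - 2 ≠ 0) (hzβ : 6*α - 2 ≠ β)
    (h : ℂ → ℂ)
    (hh : ∀ z : ℂ, h z = ((3*α - 1) / α^2) * (z^2 - 3*α*z + α) / (z^2 * (z - β))) :
    deriv h (6*α - 2) = 0 := by
  obtain rfl : h = CubicFamily.h α β := funext hh
  exact CubicFamily.deriv_h_eq_zero h0 hβ hz0 hzβ

/-- z_α = 6α - 2 is a critical point of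
h_α(z) = ((3α-1)/α²)(z²-3αz+α)/(z²(z-β)), β = 3 - 1/α: h_α'(6α-2) = 0. -/
theorem stmt_17 (α β : ℂ)
    (h0 : α ≠ 0) (h13 : α ≠ 1/3) (h12 : α ≠ 1/2) (hβ : β = 3 - 1/α)
    (hz0 : 6*α - 2 ≠ 0) (hzβ : 6*α - 2 ≠ β)
    (h : ℂ → ℂ)
    (hh : ∀ z : ℂ, h z = ((3*α - 1) / α^2) * (z^2 - 3*α*z + α) / (z^2 * (z - β))) :
    deriv h (6*α - 2) = 0 :=
  stmt_17_general α β h0 hβ hz0 hzβ h hh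
end

section
/- Let f : ℂ̂ → ℂ̂ be a rational map of degree d ≥ 2 and let U, V be distinct Fatou components with f(U) = U and f⁻¹(U) = U ∪ V. If z ∈ ∂U ∩ ∂V and there is an arc β ⊂ U avoiding the critical values of f and landing at f(z), then the two preimage arcs of β landing at z (one in U, one in V) force z to be a critical point of f. -/
/-- A point of a map `f : ℂ̂ → ℂ̂` (the Riemann sphere modeled as `OnePoint ℂ`)
is *critical* if `f` is injective on no neighborhood of it. -/
def IsCriticalAt (f : OnePoint ℂ → OnePoint ℂ) (w : OnePoint ℂ) : Prop :=
  ¬ ∃ N ∈ nhds w, Set.InjOn f N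

/-- Step in the proof of the main theorem: let f be a (rational) continuous map
of the sphere, U ≠ V disjoint (Fatou) components with f(U) = U and
f⁻¹(U) = U ∪ V, W a component with f(W) = V, and suppose f has no critical
points on the Julia set (here: every point of ∂U ∪ ∂V is non-critical only via
the hypothesis on arc values). If z ∈ ∂U ∩ ∂V and β₁ ⊂ U, β₂ ⊂ V are arcs
landing at z whose images under f coincide with an arc β ⊂ U landing at f(z)
and avoiding the critical values of f, then z is a critical point of f. -/
theorem stmt_19 (f : OnePoint ℂ → OnePoint ℂ) (hf : Continuous f)
    -- f has degree d ≥ 2: it is surjective and every point has at most d preimages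
    (d : ℕ) (hd : 2 ≤ d) (hsurj : Function.Surjective f)
    (hdeg : ∀ w : OnePoint ℂ, (f ⁻¹' {w}).ncard ≤ d)
    (U V W : Set (OnePoint ℂ)) (hUV : U ≠ V) (hdisj : Disjoint U V)
    (hUopen : IsOpen U) (hVopen : IsOpen V)
    (hUconn : IsConnected U) (hVconn : IsConnected V)
    (hfU : f '' U = U) (hpre : f ⁻¹' U = U ∪ V) (hfW : f '' W = V)
    (z : OnePoint ℂ) (hz : z ∈ frontier U ∩ frontier V)
    (β₁ β₂ : ℝ → OnePoint ℂ)
    (hc₁ : ContinuousOn β₁ (Set.Icc 0 1)) (hc₂ : ContinuousOn β₂ (Set.Icc 0 1))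
    (hβ₁U : ∀ t ∈ Set.Ico (0:ℝ) 1, β₁ t ∈ U)
    (hβ₂V : ∀ t ∈ Set.Ico (0:ℝ) 1, β₂ t ∈ V)
    (hland₁ : β₁ 1 = z) (hland₂ : β₂ 1 = z)
    -- the two arcs are the preimages of a single arc β = f ∘ β₁ in U landing at f z
    (hsame : ∀ t ∈ Set.Ico (0:ℝ) 1, f (β₁ t) = f (β₂ t))
    (hβU : ∀ t ∈ Set.Ico (0:ℝ) 1, f (β₁ t) ∈ U)
    -- β avoids the critical values of f
    (hnoncrit : ∀ t ∈ Set.Ico (0:ℝ) 1, ∀ w : OnePoint ℂ,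
      f w = f (β₁ t) → ¬ IsCriticalAt f w) :
    IsCriticalAt f z := by
  rintro ⟨N, hN, hinj⟩
  have h1 : (1:ℝ) ∈ Set.Icc (0:ℝ) 1 := by norm_num
  have t1 : Filter.Tendsto β₁ (nhdsWithin 1 (Set.Icc (0:ℝ) 1)) (nhds z) := by
    simpa [hland₁] using (hc₁ 1 h1).tendsto
  have t2 : Filter.Tendsto β₂ (nhdsWithin 1 (Set.Icc (0:ℝ) 1)) (nhds z) := by
    simpa [hland₂] using (hc₂ 1 h1).tendsto
  have hmem : {t | β₁ t ∈ N ∧ β₂ t ∈ N} ∈ nhdsWithin (1:ℝ) (Set.Icc 0 1) :=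
    Filter.inter_mem (t1 hN) (t2 hN)
  have hle : nhdsWithin (1:ℝ) (Set.Ico 0 1) ≤ nhdsWithin 1 (Set.Icc 0 1) :=
    nhdsWithin_mono _ Set.Ico_subset_Icc_self
  haveI hne : (nhdsWithin (1:ℝ) (Set.Ico 0 1)).NeBot := by
    refine mem_closure_iff_nhdsWithin_neBot.mp ?_
    rw [closure_Ico (by norm_num : (0:ℝ) ≠ 1)]
    exact Set.right_mem_Icc.mpr (by norm_num)
  obtain ⟨t, ht, htN⟩ := Filter.nonempty_of_mem (Filter.inter_mem (hle hmem) self_mem_nhdsWithin)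
  have heq : β₁ t = β₂ t := hinj ht.1 ht.2 (hsame t htN)
  exact (hdisj.ne_of_mem (hβ₁U t htN) (hβ₂V t htN)) heq
end
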